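/- Let μ ∈ Y be G-dominant. Define 𝒫(G, μ) := {ν ∈ X : ν_{G-dom} ≤_G μ}, where ν_{G-dom} is the unique G-dominant element of the W-orbit of ν, and 𝒫(H, μ) := {ν ∈ Y : ν_{H-dom} ≤_H μ}, where ν_{H-dom} is the unique H-dominant element of the W_H-orbit of ν. Then 𝒫(H, μ) = Y ∩ 𝒫(G, μ). -/

import Mathlib

/-!
Common setup: an abstract reduced irreducible crystallographic root system `R`
inside a real inner product space `E`, with simple roots `α i` (`i : ι`) forming
a basis of `E`, Weyl group generated by the reflections in the roots
(equivalently, by the simple reflections), coroot pairing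
`⟨x, a∨⟩ = 2 (x, a) / (a, a)`, weight lattice `P(R)`, root lattices `Q(R)`,
`Q(R_J)`, etc.
-/

open scoped BigOperators

noncomputable section

/-- the pairing `⟨x, a∨⟩ = 2 (x, a)/(a, a)` of `x` with the coroot of `a`. -/
def pairR {E : Type} [NormedAddCommGroup E] [InnerProductSpace ℝ E] (x a : E) : ℝ :=
  2 * (inner ℝ x a : ℝ) / (inner ℝ a a : ℝ)

/-- the reflection in (the hyperplane orthogonal to) `a`. -/
def reflFun {E : Type} [NormedAddCommGroup E] [InnerProductSpace ℝ E] (a : E) (x : E) : E :=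
  x - pairR x a • a

/-- A reduced irreducible crystallographic root system in a real inner product
space `E`, whose set of simple roots `simple : ι → E` is a basis of `E`. -/
structure RootSystemCtx (ι E : Type) [Fintype ι] [DecidableEq ι]
    [NormedAddCommGroup E] [InnerProductSpace ℝ E] : Type where
  Roots : Set E
  simple : ι → E
  simple_mem : ∀ i, simple i ∈ Roots
  finite : Roots.Finite
  ne_zero : ∀ a ∈ Roots, a ≠ 0
  reduced : ∀ a ∈ Roots, ∀ t : ℝ, t • a ∈ Roots → t = 1 ∨ t = -1
  crystal : ∀ a ∈ Roots, ∀ b ∈ Roots, ∃ n : ℤ, pairR a b = (n : ℝ)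
  refl_stable : ∀ a ∈ Roots, ∀ b ∈ Roots, reflFun b a ∈ Roots
  indep : LinearIndependent ℝ simple
  span_top : Submodule.span ℝ (Set.range simple) = ⊤
  pos_neg : ∀ a ∈ Roots, (∃ c : ι → ℕ, a = ∑ i, (c i : ℝ) • simple i) ∨
      (∃ c : ι → ℕ, a = -∑ i, (c i : ℝ) • simple i)
  irred : ∀ R1 R2 : Set E, Roots = R1 ∪ R2 →
      (∀ a ∈ R1, ∀ b ∈ R2, (inner ℝ a b : ℝ) = 0) → R1 = ∅ ∨ R2 = ∅

namespace RootSystemCtx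

variable {ι E : Type} [Fintype ι] [DecidableEq ι]
  [NormedAddCommGroup E] [InnerProductSpace ℝ E]
variable (S : RootSystemCtx ι E)

/-- `R` is simply laced: `⟨a, b∨⟩ ∈ {-1, 0, 1}` for roots `b ≠ ± a`. -/
def SimplyLaced : Prop :=
  ∀ a ∈ S.Roots, ∀ b ∈ S.Roots, b ≠ a → b ≠ -a →
    pairR a b = -1 ∨ pairR a b = 0 ∨ pairR a b = 1

/-- membership in the weight lattice `P(R)`. -/
def IsWeight (x : E) : Prop := ∀ a ∈ S.Roots, ∃ n : ℤ, pairR x a = (n : ℝ)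

/-- `x` is dominant: `⟨x, αᵢ∨⟩ ≥ 0` for all simple roots. -/
def IsDominant (x : E) : Prop := ∀ i, 0 ≤ pairR x (S.simple i)

/-- positive roots: roots that are nonnegative combinations of simple roots. -/
def IsPositiveRoot (a : E) : Prop :=
  a ∈ S.Roots ∧ ∃ c : ι → ℕ, a = ∑ i, (c i : ℝ) • S.simple i

/-- the root lattice `Q(R)`. -/
def rootLattice : AddSubgroup E := AddSubgroup.closure S.Roots

/-- the root lattice `Q(R_J)` of the sub-root system `R_J`. -/
def rootLatticeJ (J : Finset ι) : AddSubgroup E :=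
  AddSubgroup.closure (S.simple '' ↑J)

/-- the sub-root system `R_J` determined by the simple roots `α_j`, `j ∈ J`. -/
def RootsJ (J : Finset ι) : Set E :=
  {a | a ∈ S.Roots ∧ a ∈ Submodule.span ℝ (S.simple '' ↑J)}

/-- `x` is `J`-dominant. -/
def IsJDominant (J : Finset ι) (x : E) : Prop := ∀ j ∈ J, 0 ≤ pairR x (S.simple j)

/-- `x` is `J`-minuscule: `⟨x, a∨⟩ ∈ {-1,0,1}` for all `a ∈ R_J`. -/
def IsJMinuscule (J : Finset ι) (x : E) : Prop :=
  ∀ a ∈ S.RootsJ J, pairR x a = -1 ∨ pairR x a = 0 ∨ pairR x a = 1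

/-- the action of a word `[i₁, …, i_t]` of simple reflections:
`s_{i₁} ∘ ⋯ ∘ s_{i_t}`. -/
def wordAct (l : List ι) : E → E :=
  l.foldr (fun i f => reflFun (S.simple i) ∘ f) id

/-- membership in the Weyl group `W` (generated by the simple reflections). -/
def InWeyl (w : E → E) : Prop := ∃ l : List ι, S.wordAct l = w

/-- the Weyl group orbit `W x`. -/
def weylOrbit (x : E) : Set E := {y | ∃ l : List ι, y = S.wordAct l x}

/-- a word is reduced if no shorter word gives the same Weyl group element. -/
def IsReducedWord (l : List ι) : Prop :=
  ∀ l' : List ι, S.wordAct l' = S.wordAct l → l.length ≤ l'.length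

/-- `w ∈ W` is `λ`-minuscule: some (equivalently, any) reduced expression
`w = s_{i₁} ⋯ s_{i_t}` satisfies
`⟨s_{i_{r+1}} ⋯ s_{i_t} λ, α_{i_r}∨⟩ = -1` for all `1 ≤ r ≤ t`. -/
def IsMinusculeFor (lam : E) (w : E → E) : Prop :=
  ∃ l : List ι, S.wordAct l = w ∧ S.IsReducedWord l ∧
    ∀ r : Fin l.length,
      pairR (S.wordAct (l.drop (r + 1)) lam) (S.simple (l.get r)) = -1

/-- the basis of simple roots. -/
def simpleBasis : Module.Basis ι ℝ E := Module.Basis.mk S.indep S.span_top.ge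

/-- `⟨x, ωᵢ⟩`: the pairing with the fundamental coweight `ωᵢ` dual to `αᵢ`,
i.e. the `i`-th coordinate of `x` in the basis of simple roots. -/
def coweightPair (x : E) (i : ι) : ℝ := S.simpleBasis.repr x i

end RootSystemCtx

/-!
Folding setup: `X` is the cocharacter lattice of a split adjoint group with
(simply-laced) root system `R` = `S.Roots`; since `E` is self-dual via the
inner product, coroots live in `E` and the pairing `⟨α, x⟩` of a root with a
cocharacter is the inner product. `θ` is a finite-order linear isometry of `E`
preserving `X` and permuting the simple coroots (via a permutation `π` of the
index set), such that distinct roots in the same `⟨θ⟩`-orbit of a simple root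
are orthogonal. `Y = X^θ`, and the simple coroots of the folded system `H` are
the orbit sums `N(α∨)`, for `α` in a set `ℛ` of orbit representatives. The
Weyl group `W_H` of `H` is identified with the subgroup of `θ`-fixed elements
of `W`, i.e. those `w ∈ W` commuting with `θ`.
-/

/-- the coroot `a∨ = 2a/(a,a)` of `a`. -/
def corootOf {E : Type} [NormedAddCommGroup E] [InnerProductSpace ℝ E] (a : E) : E :=
  (2 / (inner ℝ a a : ℝ)) • a

/-- the orbit of `i` under the permutation `π` (i.e. under `⟨θ⟩`). -/
def orbitOf {ι : Type} (π : Equiv.Perm ι) (i : ι) : Set ι := {j | ∃ k : ℕ, (π ^ k) i = j}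

/-- `N(α∨) = ∑_{γ ∈ ⟨θ⟩-orbit of α} γ∨`, a simple coroot of the folded system. -/
def Ncoroot {ι E : Type} [Fintype ι] [DecidableEq ι]
    [NormedAddCommGroup E] [InnerProductSpace ℝ E]
    (S : RootSystemCtx ι E) (π : Equiv.Perm ι) (i : ι) : E :=
  ∑ᶠ j ∈ orbitOf π i, corootOf (S.simple j)

/-!
A `θ`-fixed `ν` can be moved into the dominant chamber by a Weyl group element commuting with `θ`:
the simple reflections in a `θ`-orbit are pairwise orthogonal, so their product commutes with `θ`,
and applying it to a `θ`-fixed vector that is not dominant at that orbit strictly increases the sum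
of its coordinates in the simple roots; a maximiser over the (finite) orbit is therefore dominant.
As the dominant element of a `W`-orbit is unique, `ν_{H-dom} = ν_{G-dom}`. Finally `μ - ν_{G-dom}`
is `θ`-fixed, so its coordinates in the simple coroots are constant on `θ`-orbits: it is a
nonnegative combination of the `α∨` exactly when it is one of the `N(α∨)`.
-/

open scoped RealInnerProductSpace

section Reflection

variable {E : Type} [NormedAddCommGroup E] [InnerProductSpace ℝ E]

lemma reflFun_eq_reflection (a : E) : reflFun a = (ℝ ∙ a)ᗮ.reflection := by
  funext x
  rw [Submodule.reflection_orthogonal_apply, Submodule.reflection_singleton_apply, reflFun,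
    pairR, real_inner_self_eq_norm_sq, real_inner_comm]
  simp only [RCLike.ofReal_real_eq_id, id]
  module

lemma reflFun_reflFun (a x : E) : reflFun a (reflFun a x) = x := by
  rw [reflFun_eq_reflection, Submodule.reflection_reflection]

lemma reflFun_sub (a x y : E) : reflFun a (x - y) = reflFun a x - reflFun a y := by
  rw [reflFun_eq_reflection, map_sub]

lemma reflFun_self (a : E) : reflFun a a = -a := by
  rw [reflFun_eq_reflection, Submodule.reflection_orthogonalComplement_singleton_eq_neg]

lemma reflFun_eq_self {a x : E} (h : ⟪a, x⟫ = 0) : reflFun a x = x := by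
  simp [reflFun, pairR, real_inner_comm, h]

lemma inner_reflFun_reflFun (a x y : E) : ⟪reflFun a x, reflFun a y⟫ = ⟪x, y⟫ := by
  rw [reflFun_eq_reflection, LinearIsometryEquiv.inner_map_map]

lemma pairR_map (g : E ≃ₗᵢ[ℝ] E) (x a : E) : pairR (g x) (g a) = pairR x a := by
  simp only [pairR, LinearIsometryEquiv.inner_map_map]

lemma map_reflFun (g : E ≃ₗᵢ[ℝ] E) (a x : E) : g (reflFun a x) = reflFun (g a) (g x) := by
  rw [reflFun, reflFun, map_sub, map_smul, pairR_map]

lemma pairR_neg_iff {x a : E} (ha : a ≠ 0) : pairR x a < 0 ↔ ⟪a, x⟫ < 0 := by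
  rw [pairR, div_neg_iff, real_inner_comm]
  have : 0 < ⟪a, a⟫ := real_inner_self_pos.2 ha
  constructor
  · rintro (⟨-, h⟩ | ⟨h, -⟩) <;> linarith
  · intro h; exact Or.inr ⟨by linarith, this⟩

end Reflection

namespace RootSystemCtx

variable {ι E : Type} [Fintype ι] [DecidableEq ι]
  [NormedAddCommGroup E] [InnerProductSpace ℝ E] (S : RootSystemCtx ι E)

def weylElem (l : List ι) : E ≃ₗᵢ[ℝ] E :=
  (l.map fun i => (ℝ ∙ S.simple i)ᗮ.reflection).prod

lemma coe_weylElem (l : List ι) : ⇑(S.weylElem l) = S.wordAct l := by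
  induction l with
  | nil => rfl
  | cons i l ih =>
    rw [weylElem, List.map_cons, List.prod_cons, LinearIsometryEquiv.coe_mul, ← weylElem, ih,
      ← reflFun_eq_reflection]
    rfl

lemma wordAct_cons (i : ι) (l : List ι) :
    S.wordAct (i :: l) = reflFun (S.simple i) ∘ S.wordAct l := rfl

lemma wordAct_append (l l' : List ι) : S.wordAct (l ++ l') = S.wordAct l ∘ S.wordAct l' := by
  simp only [← coe_weylElem, weylElem, List.map_append, List.prod_append,
    LinearIsometryEquiv.coe_mul]

lemma wordAct_singleton (i : ι) : S.wordAct [i] = reflFun (S.simple i) := rfl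

lemma wordAct_reverse_apply (l : List ι) (x : E) : S.wordAct l.reverse (S.wordAct l x) = x := by
  induction l generalizing x with
  | nil => rfl
  | cons i l ih =>
    rw [List.reverse_cons, wordAct_append, Function.comp_apply, wordAct_singleton, wordAct_cons,
      Function.comp_apply, reflFun_reflFun, ih]

lemma inner_wordAct (l : List ι) (x y : E) : ⟪S.wordAct l x, S.wordAct l y⟫ = ⟪x, y⟫ := by
  rw [← coe_weylElem, LinearIsometryEquiv.inner_map_map]

lemma wordAct_mem_roots (l : List ι) {a : E} (ha : a ∈ S.Roots) : S.wordAct l a ∈ S.Roots := by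
  induction l with
  | nil => exact ha
  | cons i l ih => exact S.refl_stable _ ih _ (S.simple_mem i)

lemma simple_ne_zero (i : ι) : S.simple i ≠ 0 := S.ne_zero _ (S.simple_mem i)

lemma isDominant_iff (x : E) : S.IsDominant x ↔ ∀ i, 0 ≤ ⟪S.simple i, x⟫ := by
  refine forall_congr' fun i => ?_
  rw [← not_lt, ← not_lt, pairR_neg_iff (S.simple_ne_zero i)]

lemma simpleBasis_apply (i : ι) : S.simpleBasis i = S.simple i := Module.Basis.mk_apply _ _ i

lemma coweightPair_eq_coord (x : E) (i : ι) : S.coweightPair x i = S.simpleBasis.coord i x := rfl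

lemma sum_coweightPair_smul (x : E) : ∑ i, S.coweightPair x i • S.simple i = x := by
  simpa only [coweightPair, simpleBasis_apply] using S.simpleBasis.sum_repr x

lemma coweightPair_sum_smul (c : ι → ℝ) : S.coweightPair (∑ i, c i • S.simple i) = c := by
  have h := S.simpleBasis.repr_sum_self c
  simp only [simpleBasis_apply] at h
  exact h

lemma coweightPair_simple (i j : ι) : S.coweightPair (S.simple i) j = if i = j then 1 else 0 := by
  rw [coweightPair, ← simpleBasis_apply, Module.Basis.repr_self, Finsupp.single_apply]

lemma weylOrbit_finite (v : E) : (S.weylOrbit v).Finite := by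
  refine ((Set.Finite.pi fun _ : ι => S.finite).image
    fun g => ∑ i, S.coweightPair v i • g i).subset ?_
  -- `w v` is determined by the roots `w αᵢ`
  rintro _ ⟨l, rfl⟩
  refine ⟨fun i => S.wordAct l (S.simple i), fun i _ => S.wordAct_mem_roots l (S.simple_mem i), ?_⟩
  conv_rhs => rw [← S.sum_coweightPair_smul v, ← coe_weylElem, map_sum]
  simp only [map_smul, coe_weylElem]

/-- On roots, this is positivity. -/
def IsPos (a : E) : Prop := ∀ i, 0 ≤ S.coweightPair a i

variable {S}

lemma isPos_simple (j : ι) : S.IsPos (S.simple j) := fun i => by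
  rw [coweightPair_simple]; split_ifs <;> norm_num

lemma isPos_or_isPos_neg {a : E} (ha : a ∈ S.Roots) : S.IsPos a ∨ S.IsPos (-a) := by
  rcases S.pos_neg a ha with ⟨c, rfl⟩ | ⟨c, rfl⟩
  · exact Or.inl fun i => by rw [coweightPair_sum_smul]; exact Nat.cast_nonneg _
  · exact Or.inr fun i => by rw [neg_neg, coweightPair_sum_smul]; exact Nat.cast_nonneg _

lemma not_isPos_neg_of_isPos {a : E} (ha : a ≠ 0) (hpos : S.IsPos a) : ¬S.IsPos (-a) := by
  intro hneg
  refine ha (S.simpleBasis.forall_coord_eq_zero_iff.1 fun i => le_antisymm ?_ (hpos i))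
  simpa [coweightPair_eq_coord] using hneg i

lemma isPos_of_coweightPair_pos {a : E} (ha : a ∈ S.Roots) {k : ι}
    (hk : 0 < S.coweightPair a k) : S.IsPos a :=
  (isPos_or_isPos_neg ha).resolve_right fun hneg => by
    have := hneg k
    rw [coweightPair_eq_coord, map_neg, ← coweightPair_eq_coord] at this
    linarith

lemma coweightPair_reflFun_simple (x : E) {i k : ι} (hk : k ≠ i) :
    S.coweightPair (reflFun (S.simple i) x) k = S.coweightPair x k := by
  rw [reflFun, coweightPair_eq_coord, map_sub, map_smul, ← coweightPair_eq_coord,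
    ← coweightPair_eq_coord, coweightPair_simple, if_neg hk.symm, smul_zero, sub_zero]

lemma isPos_reflFun_simple {β : E} (hβ : β ∈ S.Roots) (hpos : S.IsPos β) {i : ι}
    (hne : β ≠ S.simple i) : S.IsPos (reflFun (S.simple i) β) := by
  by_cases h : ∃ k ≠ i, 0 < S.coweightPair β k
  · obtain ⟨k, hk, hβk⟩ := h
    exact isPos_of_coweightPair_pos (S.refl_stable _ hβ _ (S.simple_mem i))
      (coweightPair_reflFun_simple β hk ▸ hβk)
  · push Not at h
    have hβi : β = S.coweightPair β i • S.simple i := by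
      conv_lhs => rw [← S.sum_coweightPair_smul β]
      refine Finset.sum_eq_single i (fun k _ hk => ?_) (by simp)
      rw [le_antisymm (h k hk) (hpos k), zero_smul]
    rcases S.reduced _ (S.simple_mem i) _ (hβi ▸ hβ) with h1 | h1
    · exact absurd (by rw [hβi, h1, one_smul]) hne
    · linarith [hpos i]

lemma inner_nonneg_of_isPos {a x : E} (ha : S.IsPos a) (hx : S.IsDominant x) : 0 ≤ ⟪a, x⟫ := by
  rw [← S.sum_coweightPair_smul a, sum_inner]
  refine Finset.sum_nonneg fun i _ => ?_
  rw [real_inner_smul_left]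
  exact mul_nonneg (ha i) ((S.isDominant_iff x).1 hx i)

lemma wordAct_reflFun (l : List ι) (a x : E) :
    S.wordAct l (reflFun a x) = reflFun (S.wordAct l a) (S.wordAct l x) := by
  simp only [← coe_weylElem, map_reflFun]

lemma exists_shorter_word_of_isPos_neg (l : List ι) (j : ι)
    (h : S.IsPos (-S.wordAct l (S.simple j))) :
    ∃ l' : List ι, l'.length + 1 = l.length ∧
      S.wordAct l' = S.wordAct l ∘ reflFun (S.simple j) := by
  induction l with
  | nil => exact absurd h (not_isPos_neg_of_isPos (S.simple_ne_zero j) (isPos_simple j))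
  | cons i t ih =>
    have hroot := S.wordAct_mem_roots t (S.simple_mem j)
    rcases isPos_or_isPos_neg hroot with hpos | hneg
    · -- `s_i` sends the positive root `w_t α_j` to a negative one, so it is `α_i`
      have heq : S.wordAct t (S.simple j) = S.simple i := by
        by_contra hne
        exact not_isPos_neg_of_isPos (S.ne_zero _ (S.refl_stable _ hroot _ (S.simple_mem i)))
          (isPos_reflFun_simple hroot hpos hne) h
      refine ⟨t, rfl, funext fun x => ?_⟩
      rw [Function.comp_apply, wordAct_cons, Function.comp_apply, wordAct_reflFun, heq,
        reflFun_reflFun]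
    · obtain ⟨t', ht', hw⟩ := ih hneg
      exact ⟨i :: t', by simp [ht'], by rw [wordAct_cons, wordAct_cons, hw]; rfl⟩

/-- Write `w = w' s_k`. If `w' α_k > 0` then `⟪α_k, v⟫ = -⟪w' α_k, w v⟫ ≤ 0`, so `s_k` fixes `v`;
otherwise the exchange property makes `w` a shorter word. -/
theorem wordAct_eq_self_of_isDominant {v : E} (hv : S.IsDominant v) (l : List ι)
    (hl : S.IsDominant (S.wordAct l v)) : S.wordAct l v = v := by
  rcases l.eq_nil_or_concat' with rfl | ⟨l', k, rfl⟩
  · rfl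
  have hw : S.wordAct (l' ++ [k]) = S.wordAct l' ∘ reflFun (S.simple k) := S.wordAct_append _ _
  rcases isPos_or_isPos_neg (S.wordAct_mem_roots l' (S.simple_mem k)) with hpos | hneg
  · have hk : ⟪S.simple k, v⟫ = 0 := by
      refine le_antisymm ?_ ((S.isDominant_iff v).1 hv k)
      calc ⟪S.simple k, v⟫
          = -⟪S.wordAct l' (S.simple k), S.wordAct (l' ++ [k]) v⟫ := by
            rw [hw, Function.comp_apply, inner_wordAct, ← inner_neg_left, ← reflFun_self,
              inner_reflFun_reflFun]
        _ ≤ 0 := neg_nonpos.2 (inner_nonneg_of_isPos hpos hl)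
    have hfix : S.wordAct (l' ++ [k]) v = S.wordAct l' v := by
      rw [hw, Function.comp_apply, reflFun_eq_self hk]
    rw [hfix] at hl ⊢
    exact wordAct_eq_self_of_isDominant hv l' hl
  · obtain ⟨l'', hlen, hl''⟩ := exists_shorter_word_of_isPos_neg l' k hneg
    rw [hw, ← hl''] at hl ⊢
    exact wordAct_eq_self_of_isDominant hv l'' hl
termination_by l.length
decreasing_by all_goals subst_vars; simp only [List.length_append, List.length_singleton]; omega

lemma wordAct_eq_of_isDominant {v : E} {l l' : List ι} (h : S.IsDominant (S.wordAct l v))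
    (h' : S.IsDominant (S.wordAct l' v)) : S.wordAct l v = S.wordAct l' v := by
  have key := wordAct_eq_self_of_isDominant h' (l ++ l'.reverse)
    (by rwa [wordAct_append, Function.comp_apply, wordAct_reverse_apply])
  rwa [wordAct_append, Function.comp_apply, wordAct_reverse_apply] at key

lemma wordAct_of_pairwise_orthogonal (L : List ι)
    (hL : L.Pairwise fun j k => ⟪S.simple j, S.simple k⟫ = 0) (x : E) :
    S.wordAct L x = x - (L.map fun j => pairR x (S.simple j) • S.simple j).sum := by
  induction L with
  | nil => simp [wordAct]
  | cons j L ih =>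
    rw [List.pairwise_cons] at hL
    have horthL : ⟪S.simple j, (L.map fun k => pairR x (S.simple k) • S.simple k).sum⟫ = 0 := by
      rw [← innerₛₗ_apply_apply (𝕜 := ℝ), map_list_sum, List.map_map]
      refine List.sum_eq_zero fun y hy => ?_
      obtain ⟨k, hk, rfl⟩ := List.mem_map.1 hy
      simp [real_inner_smul_right, hL.1 k hk]
    rw [wordAct_cons, Function.comp_apply, ih hL.2, reflFun_sub, reflFun_eq_self horthL, reflFun,
      List.map_cons, List.sum_cons, sub_sub]

end RootSystemCtx

lemma mem_orbitOf_iff {ι : Type} [Finite ι] {π : Equiv.Perm ι} {i j : ι} :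
    j ∈ orbitOf π i ↔ π.SameCycle i j :=
  ⟨fun ⟨k, hk⟩ => ⟨k, by rw [zpow_natCast, hk]⟩,
    fun h => let ⟨k, _, hk⟩ := h.exists_pow_eq'; ⟨k, hk⟩⟩

lemma Equiv.Perm.SameCycle.eq_of_invariant {ι α : Type} [Finite ι] {π : Equiv.Perm ι}
    {f : ι → α} (hf : ∀ i, f (π i) = f i) {i j : ι} (h : π.SameCycle i j) : f j = f i := by
  obtain ⟨k, -, rfl⟩ := h.exists_pow_eq'
  clear h
  induction k with
  | zero => rfl
  | succ k ih => rw [pow_succ', Equiv.Perm.mul_apply, hf, ih]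

def orbitFinset {ι : Type} [Fintype ι] [DecidableEq ι] (π : Equiv.Perm ι) (i : ι) : Finset ι :=
  {j | π.SameCycle i j}

lemma mem_orbitFinset {ι : Type} [Fintype ι] [DecidableEq ι] {π : Equiv.Perm ι} {i j : ι} :
    j ∈ orbitFinset π i ↔ π.SameCycle i j := by
  simp [orbitFinset]

namespace RootSystemCtx

variable {ι E : Type} [Fintype ι] [DecidableEq ι]
  [NormedAddCommGroup E] [InnerProductSpace ℝ E] {S : RootSystemCtx ι E}
  {θ : E ≃ₗᵢ[ℝ] E} {π : Equiv.Perm ι}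

variable (S π) in
lemma Ncoroot_eq_sum (i : ι) :
    Ncoroot S π i = ∑ j ∈ orbitFinset π i, corootOf (S.simple j) := by
  have h : orbitOf π i = ↑(orbitFinset π i) := by ext j; simp [mem_orbitFinset, mem_orbitOf_iff]
  rw [Ncoroot, h, finsum_mem_coe_finset]

section ThetaFixed

variable (hθsimple : ∀ i, θ (S.simple i) = S.simple (π i))
include hθsimple

lemma inner_simple_perm {x : E} (hx : θ x = x) (i : ι) :
    ⟪S.simple (π i), x⟫ = ⟪S.simple i, x⟫ := by
  rw [← hθsimple, ← LinearIsometryEquiv.inner_map_map θ (S.simple i) x, hx]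

lemma pairR_simple_perm {x : E} (hx : θ x = x) (i : ι) :
    pairR x (S.simple (π i)) = pairR x (S.simple i) := by
  rw [← hθsimple, ← pairR_map θ x (S.simple i), hx]

lemma coweightPair_theta (x : E) (i : ι) : S.coweightPair (θ x) (π i) = S.coweightPair x i := by
  have hθx : θ x = ∑ j, S.coweightPair x (π.symm j) • S.simple j := by
    conv_lhs => rw [← S.sum_coweightPair_smul x]
    rw [map_sum, ← Equiv.sum_comp π fun j => S.coweightPair x (π.symm j) • S.simple j]
    simp only [map_smul, hθsimple, Equiv.symm_apply_apply]
  rw [hθx, S.coweightPair_sum_smul, Equiv.symm_apply_apply]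

lemma coeff_perm_eq_of_theta_fixed {x : E} (hx : θ x = x) {c : ι → ℝ}
    (hc : x = ∑ i, c i • corootOf (S.simple i)) (i : ι) : c (π i) = c i := by
  have hcoord : S.coweightPair x = fun i => c i * (2 / ⟪S.simple i, S.simple i⟫) := by
    rw [hc]
    simp only [corootOf, smul_smul]
    exact S.coweightPair_sum_smul _
  have hnorm : ⟪S.simple (π i), S.simple (π i)⟫ = ⟪S.simple i, S.simple i⟫ := by
    rw [← hθsimple, LinearIsometryEquiv.inner_map_map]
  have key := coweightPair_theta hθsimple x i
  rw [hx, hcoord] at key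
  simp only [hnorm] at key
  exact mul_right_cancel₀ (div_ne_zero two_ne_zero
    (real_inner_self_pos.2 (S.simple_ne_zero i)).ne') key

lemma isDominant_of_theta_fixed {ℛ : Finset ι} (hℛ : ∀ j : ι, ∃! i, i ∈ ℛ ∧ j ∈ orbitOf π i)
    {x : E} (hx : θ x = x) (h : ∀ i ∈ ℛ, 0 ≤ ⟪S.simple i, x⟫) : S.IsDominant x := by
  refine (S.isDominant_iff x).2 fun j => ?_
  obtain ⟨r, ⟨hr, hj⟩, -⟩ := hℛ j
  rw [(mem_orbitOf_iff.1 hj).eq_of_invariant (f := fun i => ⟪S.simple i, x⟫)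
    (inner_simple_perm hθsimple hx)]
  exact h r hr

end ThetaFixed

section OrbitReflections

variable (horth : ∀ i : ι, ∀ k : ℕ, S.simple ((π ^ k) i) ≠ S.simple i →
      (inner ℝ (S.simple i) (S.simple ((π ^ k) i)) : ℝ) = 0)
include horth

lemma inner_simple_eq_zero_of_sameCycle {i j : ι} (h : π.SameCycle i j) (hne : i ≠ j) :
    ⟪S.simple i, S.simple j⟫ = 0 := by
  obtain ⟨k, -, rfl⟩ := h.exists_pow_eq'
  exact horth i k fun heq => hne (S.indep.injective heq).symm

lemma wordAct_orbitFinset (i : ι) (x : E) :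
    S.wordAct (orbitFinset π i).toList x
      = x - ∑ j ∈ orbitFinset π i, pairR x (S.simple j) • S.simple j := by
  rw [wordAct_of_pairwise_orthogonal, Finset.sum_map_toList]
  refine (Finset.nodup_toList _).pairwise_of_forall_ne fun j hj k hk hne => ?_
  rw [Finset.mem_toList, mem_orbitFinset] at hj hk
  exact inner_simple_eq_zero_of_sameCycle horth (hj.symm.trans hk) hne

variable (hθsimple : ∀ i, θ (S.simple i) = S.simple (π i))
include hθsimple

lemma commute_wordAct_orbitFinset (i : ι) :
    Function.Commute θ (S.wordAct (orbitFinset π i).toList) := fun x => by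
  rw [wordAct_orbitFinset horth, wordAct_orbitFinset horth, map_sub, map_sum]
  congr 1
  simp only [orbitFinset, Finset.sum_filter, map_smul, hθsimple]
  rw [← Equiv.sum_comp π
    fun j => if π.SameCycle i j then pairR (θ x) (S.simple j) • S.simple j else 0]
  simp only [Equiv.Perm.sameCycle_apply_right, ← hθsimple, pairR_map]

theorem exists_commute_isDominant {ν : E} (hν : θ ν = ν) :
    ∃ l : List ι, Function.Commute θ (S.wordAct l) ∧ S.IsDominant (S.wordAct l ν) := by
  set O : Set E := {y | ∃ l : List ι, Function.Commute θ (S.wordAct l) ∧ y = S.wordAct l ν}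
  have hO : O.Finite := (S.weylOrbit_finite ν).subset fun y ⟨l, _, hy⟩ => ⟨l, hy⟩
  obtain ⟨_, ⟨l, hl, rfl⟩, hmax⟩ :=
    O.exists_max_image S.simpleBasis.sumCoords hO ⟨ν, [], Function.Commute.id_right, rfl⟩
  refine ⟨l, hl, (S.isDominant_iff _).2 fun i => not_lt.1 fun hi => ?_⟩
  set a := S.wordAct l ν
  have ha : θ a = a := by rw [hl ν, hν]
  have hb : S.wordAct ((orbitFinset π i).toList ++ l) ν
      = a - pairR a (S.simple i) • ∑ j ∈ orbitFinset π i, S.simple j := by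
    rw [wordAct_append, Function.comp_apply, wordAct_orbitFinset horth, Finset.smul_sum]
    refine congrArg _ (Finset.sum_congr rfl fun j hj => ?_)
    rw [(mem_orbitFinset.1 hj).eq_of_invariant (f := fun j => pairR a (S.simple j))
      (pairR_simple_perm hθsimple ha)]
  have hle := hmax _ ⟨_, by
    rw [wordAct_append]; exact (commute_wordAct_orbitFinset horth hθsimple i).comp_right hl, rfl⟩
  have hsum : S.simpleBasis.sumCoords (∑ j ∈ orbitFinset π i, S.simple j)
      = (orbitFinset π i).card := by
    simp [← simpleBasis_apply]
  rw [hb, map_sub, map_smul, hsum, smul_eq_mul] at hle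
  have hc : pairR a (S.simple i) < 0 := (pairR_neg_iff (S.simple_ne_zero i)).2 hi
  have hcard : (0 : ℝ) < (orbitFinset π i).card :=
    Nat.cast_pos.2 (Finset.card_pos.2 ⟨i, mem_orbitFinset.2 (Equiv.Perm.SameCycle.refl _ _)⟩)
  nlinarith

end OrbitReflections

variable (S) in
lemma sum_smul_Ncoroot {ℛ : Finset ι} (hℛ : ∀ j : ι, ∃! i, i ∈ ℛ ∧ j ∈ orbitOf π i)
    (c : ι → ℝ) (hc : ∀ r ∈ ℛ, ∀ j ∈ orbitOf π r, c j = c r) :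
    ∑ r ∈ ℛ, c r • Ncoroot S π r = ∑ j, c j • corootOf (S.simple j) := by
  choose rep hrep using fun j => (hℛ j).exists
  rw [← Finset.sum_fiberwise_of_maps_to (g := rep) (t := ℛ) (fun j _ => (hrep j).1)
    fun j => c j • corootOf (S.simple j)]
  refine Finset.sum_congr rfl fun r hr => ?_
  have hfiber : ({j | rep j = r} : Finset ι) = orbitFinset π r := by
    ext j
    simp only [Finset.mem_filter, Finset.mem_univ, true_and, mem_orbitFinset, ← mem_orbitOf_iff]
    exact ⟨fun h => h ▸ (hrep j).2, fun hj => (hℛ j).unique (hrep j) ⟨hr, hj⟩⟩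
  rw [hfiber, Ncoroot_eq_sum, Finset.smul_sum]
  exact Finset.sum_congr rfl fun j hj => by
    rw [hc r hr j (mem_orbitOf_iff.2 (mem_orbitFinset.1 hj))]

end RootSystemCtx

/-- The `G`- (resp. `H`-) dominant representative of the `W`- (resp. `W_H`-) orbit of `ν` is
expressed by an existential over Weyl group elements (resp. those commuting with `θ`); this is
equivalent since the dominant representative is unique. -/
theorem PH_eq_Y_inter_PG_general
    {ι E : Type} [Fintype ι] [DecidableEq ι]
    [NormedAddCommGroup E] [InnerProductSpace ℝ E]
    (S : RootSystemCtx ι E)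
    (X : AddSubgroup E)
    (θ : E ≃ₗᵢ[ℝ] E)
    (π : Equiv.Perm ι) (hθsimple : ∀ i, θ (S.simple i) = S.simple (π i))
    (horth : ∀ i : ι, ∀ k : ℕ, S.simple ((π ^ k) i) ≠ S.simple i →
      (inner ℝ (S.simple i) (S.simple ((π ^ k) i)) : ℝ) = 0)
    (ℛ : Finset ι) (hℛ : ∀ j : ι, ∃! i, i ∈ ℛ ∧ j ∈ orbitOf π i)
    (μ : E) (hμθ : θ μ = μ) :
    ∀ ν : E,
      ((ν ∈ X ∧ θ ν = ν) ∧
        ∃ w : E → E, S.InWeyl w ∧ (∀ x : E, θ (w x) = w (θ x)) ∧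
          (∀ i ∈ ℛ, 0 ≤ (inner ℝ (S.simple i) (w ν) : ℝ)) ∧
          ∃ d : ι → ℕ, μ - w ν = ∑ i ∈ ℛ, (d i : ℝ) • Ncoroot S π i) ↔
      ((ν ∈ X ∧ θ ν = ν) ∧
        ∃ w : E → E, S.InWeyl w ∧
          (∀ i : ι, 0 ≤ (inner ℝ (S.simple i) (w ν) : ℝ)) ∧
          ∃ c : ι → ℕ, μ - w ν = ∑ i, (c i : ℝ) • corootOf (S.simple i)) := by
  open RootSystemCtx in
  intro ν
  constructor
  · rintro ⟨hν, w, hw, hwθ, hdom, d, hd⟩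
    choose rep hrep using fun j => (hℛ j).exists
    have hrep_eq : ∀ r ∈ ℛ, ∀ j ∈ orbitOf π r, rep j = r :=
      fun r hr j hj => (hℛ j).unique (hrep j) ⟨hr, hj⟩
    have hrep_self : ∀ r ∈ ℛ, rep r = r := fun r hr => hrep_eq r hr r ⟨0, rfl⟩
    refine ⟨hν, w, hw, (S.isDominant_iff _).1 (isDominant_of_theta_fixed hθsimple hℛ
      (by rw [hwθ, hν.2]) hdom), fun j => d (rep j), ?_⟩
    rw [hd, ← S.sum_smul_Ncoroot hℛ _ fun r hr j hj => by
      simp only [hrep_eq r hr j hj, hrep_self r hr]]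
    exact Finset.sum_congr rfl fun r hr => by simp only [hrep_self r hr]
  · rintro ⟨hν, _, ⟨l, rfl⟩, hdom, c, hc⟩
    obtain ⟨l₀, hl₀θ, hl₀dom⟩ := exists_commute_isDominant horth hθsimple hν.2
    rw [wordAct_eq_of_isDominant ((S.isDominant_iff _).2 hdom) hl₀dom] at hc
    have hfix : θ (μ - S.wordAct l₀ ν) = μ - S.wordAct l₀ ν := by
      rw [map_sub, hμθ, hl₀θ ν, hν.2]
    refine ⟨hν, S.wordAct l₀, ⟨l₀, rfl⟩, hl₀θ, fun i _ => (S.isDominant_iff _).1 hl₀dom i, c, ?_⟩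
    rw [hc, S.sum_smul_Ncoroot hℛ _ fun r _ j hj => (mem_orbitOf_iff.1 hj).eq_of_invariant
      (coeff_perm_eq_of_theta_fixed hθsimple hfix hc)]

/-- (folding) Let `μ ∈ Y = X^θ` be `G`-dominant. With
`𝒫(G,μ) = {ν ∈ X : ν_{G-dom} ≤_G μ}` and `𝒫(H,μ) = {ν ∈ Y : ν_{H-dom} ≤_H μ}`,
one has `𝒫(H,μ) = Y ∩ 𝒫(G,μ)`. The `G`- (resp. `H`-) dominant representative
of the `W`- (resp. `W_H`-) orbit of `ν` is expressed by an existential over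
Weyl group elements (resp. `θ`-fixed Weyl group elements, i.e. those commuting
with `θ`); this is equivalent since the dominant representative is unique. -/
theorem PH_eq_Y_inter_PG
    {ι E : Type} [Fintype ι] [DecidableEq ι]
    [NormedAddCommGroup E] [InnerProductSpace ℝ E]
    (S : RootSystemCtx ι E) (hSL : S.SimplyLaced)
    (X : AddSubgroup E)
    (hXcor : ∀ a ∈ S.Roots, corootOf a ∈ X)
    (hXint : ∀ a ∈ S.Roots, ∀ x ∈ X, ∃ m : ℤ, (inner ℝ a x : ℝ) = m)
    (θ : E ≃ₗᵢ[ℝ] E) (n : ℕ) (hn : 0 < n) (hθn : θ ^ n = 1)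
    (hθX : ∀ x ∈ X, θ x ∈ X)
    (π : Equiv.Perm ι) (hθsimple : ∀ i, θ (S.simple i) = S.simple (π i))
    (horth : ∀ i : ι, ∀ k : ℕ, S.simple ((π ^ k) i) ≠ S.simple i →
      (inner ℝ (S.simple i) (S.simple ((π ^ k) i)) : ℝ) = 0)
    (ℛ : Finset ι) (hℛ : ∀ j : ι, ∃! i, i ∈ ℛ ∧ j ∈ orbitOf π i)
    (μ : E) (hμX : μ ∈ X) (hμθ : θ μ = μ)
    (hμdom : ∀ i : ι, 0 ≤ (inner ℝ (S.simple i) μ : ℝ)) :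
    ∀ ν : E,
      ((ν ∈ X ∧ θ ν = ν) ∧
        ∃ w : E → E, S.InWeyl w ∧ (∀ x : E, θ (w x) = w (θ x)) ∧
          (∀ i ∈ ℛ, 0 ≤ (inner ℝ (S.simple i) (w ν) : ℝ)) ∧
          ∃ d : ι → ℕ, μ - w ν = ∑ i ∈ ℛ, (d i : ℝ) • Ncoroot S π i) ↔
      ((ν ∈ X ∧ θ ν = ν) ∧
        ∃ w : E → E, S.InWeyl w ∧
          (∀ i : ι, 0 ≤ (inner ℝ (S.simple i) (w ν) : ℝ)) ∧
          ∃ c : ι → ℕ, μ - w ν = ∑ i, (c i : ℝ) • corootOf (S.simple i)) :=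
  PH_eq_Y_inter_PG_general S X θ π hθsimple horth ℛ hℛ μ hμθ
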